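/- arXiv:2008.06031 — 5 statements merged into one kernel-verified Lean document; each statement's English description precedes it below -/
import Mathlib

section
/- A subspace L of the matrix algebra M_n(ℂ) (n ≥ 2) is a Lie ideal (i.e., [L, M_n(ℂ)] ⊆ L) if and only if L is one of: (0), ℂ·I_n, sl_n (trace-zero matrices), or M_n(ℂ). -/
/-!
If every element of a Lie ideal `L` is diagonal, then every element is scalar, because the
commutator of a diagonal `x` with `E i j` is `(x i i - x j j) • E i j`; inside the line `K ∙ 1`
only `⊥` and `K ∙ 1` remain. Otherwise some `y ∈ L` has `y i j ≠ 0` with `i ≠ j`, and the double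
commutator `[[y, E j i], E j i] = -2 y i j • E j i` puts a matrix unit into `L`. Commuting it with
further matrix units produces every off-diagonal `E k l` and every `E k k - E l l`, so `slₙ ≤ L`.
As the kernel of the surjective trace, `slₙ` is a maximal subspace, so `L` is `slₙ` or everything.
-/

open Matrix

namespace Submodule

def IsLieIdeal {R A : Type*} [Semiring R] [Ring A] [Module R A] (L : Submodule R A) : Prop :=
  ∀ x ∈ L, ∀ a : A, x * a - a * x ∈ L

theorem isLieIdeal_bot {R A : Type*} [Semiring R] [Ring A] [Module R A] :
    (⊥ : Submodule R A).IsLieIdeal := by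
  intro x hx a
  simp_all

theorem isLieIdeal_top {R A : Type*} [Semiring R] [Ring A] [Module R A] :
    (⊤ : Submodule R A).IsLieIdeal := fun _ _ _ ↦ mem_top

theorem isLieIdeal_span_one {R A : Type*} [CommRing R] [Ring A] [Algebra R A] :
    (span R {(1 : A)}).IsLieIdeal := by
  intro x hx a
  obtain ⟨c, rfl⟩ := mem_span_singleton.mp hx
  simp

variable {R : Type*} [CommRing R] {ι : Type*} [Fintype ι] [DecidableEq ι]

theorem isLieIdeal_ker_trace :
    (LinearMap.ker (traceLinearMap ι R R)).IsLieIdeal := by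
  intro x _ a
  simp [trace_sub, trace_mul_comm x a]

section CommRing

variable {L : Submodule R (Matrix ι ι R)}

theorem IsLieIdeal.mem_range_scalar_of_forall_isDiag (hL : L.IsLieIdeal)
    (hdiag : ∀ x ∈ L, x.IsDiag) {x : Matrix ι ι R} (hx : x ∈ L) :
    x ∈ Set.range (scalar ι) := by
  refine mem_range_scalar_of_commute_single fun i j hij ↦ ?_
  have hij' : x i i = x j j := by
    simpa [sub_eq_zero, hij] using hdiag _ (hL x hx (single i j 1)) hij
  rw [← (hdiag x hx).diagonal_diag]
  ext a b
  by_cases ha : i = a <;> by_cases hb : j = b <;>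
    simp_all [mul_diagonal, diagonal_mul, single]

theorem IsLieIdeal.single_mem_of_same_row (hL : L.IsLieIdeal) {i j l : ι}
    (h : single i j 1 ∈ L) (hl : l ≠ i) : single i l (1 : R) ∈ L := by
  simpa [hl] using hL _ h (single j l 1)

theorem IsLieIdeal.single_mem_of_same_col (hL : L.IsLieIdeal) {i j k : ι}
    (h : single i j 1 ∈ L) (hk : k ≠ j) : single k j (1 : R) ∈ L := by
  simpa [hk.symm] using hL _ h (single k i 1)

theorem IsLieIdeal.ker_trace_le_of_forall_single_mem (hL : L.IsLieIdeal)
    (hsingle : ∀ k l : ι, k ≠ l → single k l (1 : R) ∈ L) :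
    LinearMap.ker (traceLinearMap ι R R) ≤ L := by
  intro x hx
  rw [LinearMap.mem_ker, traceLinearMap_apply] at hx
  cases isEmpty_or_nonempty ι
  · simp [Subsingleton.elim x 0]
  obtain ⟨z⟩ := ‹Nonempty ι›
  have hmem : ∀ k l, single k l 1 - (if k = l then single z z 1 else 0) ∈ L := by
    intro k l
    by_cases hkl : k = l
    · subst hkl
      by_cases hkz : k = z
      · simp [hkz]
      · simpa using hL _ (hsingle k z hkz) (single z k 1)
    · simpa [hkl] using hsingle k l hkl
  -- the diagonal of `x` is carried by the `E k k - E z z`, at the cost of `trace x • E z z = 0`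
  have hx_eq : x = ∑ k, ∑ l, x k l • (single k l 1 - if k = l then single z z 1 else 0) := by
    simp only [smul_sub, Finset.sum_sub_distrib, smul_ite, smul_zero, Finset.sum_ite_eq,
      Finset.mem_univ, if_true]
    rw [← Finset.sum_smul, show ∑ k, x k k = x.trace from rfl, hx, zero_smul, sub_zero]
    simp_rw [smul_single, smul_eq_mul, mul_one]
    exact matrix_eq_sum_single x
  rw [hx_eq]
  exact sum_mem fun k _ ↦ sum_mem fun l _ ↦ smul_mem _ _ (hmem k l)

end CommRing

section Field

variable {K : Type*} [Field K] {L : Submodule K (Matrix ι ι K)}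

theorem IsLieIdeal.eq_bot_or_eq_span_one_of_forall_isDiag (hL : L.IsLieIdeal)
    (hdiag : ∀ x ∈ L, x.IsDiag) : L = ⊥ ∨ L = span K {1} := by
  have hle : L ≤ span K {1} := by
    intro x hx
    obtain ⟨c, rfl⟩ := hL.mem_range_scalar_of_forall_isDiag hdiag hx
    exact mem_span_singleton.mpr ⟨c, by rw [scalar_apply, smul_one_eq_diagonal]⟩
  simpa using
    (wcovBy_span_singleton_sup (1 : Matrix ι ι K) ⊥).eq_or_eq bot_le (by simpa using hle)

theorem IsLieIdeal.single_mem_of_apply_ne_zero (hL : L.IsLieIdeal) (h2 : (2 : K) ≠ 0)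
    {y : Matrix ι ι K} (hy : y ∈ L) {i j : ι} (hij : i ≠ j) (hyij : y i j ≠ 0) :
    single j i (1 : K) ∈ L := by
  set E : Matrix ι ι K := single j i 1
  have hEE : E * E = 0 := single_mul_single_of_ne _ _ _ _ hij _
  have key : (y * E - E * y) * E - E * (y * E - E * y) = (-2 * y i j) • E := by
    rw [sub_mul, mul_sub, ← mul_assoc E y, ← mul_assoc E E, hEE, zero_mul, mul_assoc y, hEE,
      mul_zero, single_mul_mul_single,
      show single j i (1 * y i j * 1) = y i j • E by simp [E, smul_single]]
    module
  have := hL _ (hL y hy E) E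
  rwa [key, smul_mem_iff _ (by simp [h2, hyij])] at this

theorem IsLieIdeal.single_mem_of_ne (hL : L.IsLieIdeal) (h2 : (2 : K) ≠ 0) {p q : ι}
    (hpq : p ≠ q) (h : single p q (1 : K) ∈ L) {k l : ι} (hkl : k ≠ l) :
    single k l (1 : K) ∈ L := by
  obtain ⟨m, hm⟩ : ∃ m, single k m (1 : K) ∈ L := by
    by_cases hkq : k = q
    · exact ⟨p, hkq ▸ hL.single_mem_of_apply_ne_zero h2 h hpq (by simp)⟩
    · exact ⟨q, hL.single_mem_of_same_col h hkq⟩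
  exact hL.single_mem_of_same_row hm hkl.symm

theorem IsLieIdeal.eq_ker_trace_or_eq_top_of_not_isDiag (hL : L.IsLieIdeal)
    (h2 : (2 : K) ≠ 0) {y : Matrix ι ι K} (hy : y ∈ L) (hnd : ¬y.IsDiag) :
    L = LinearMap.ker (traceLinearMap ι K K) ∨ L = ⊤ := by
  obtain ⟨i, j, hij, hyij⟩ : ∃ i j, i ≠ j ∧ y i j ≠ 0 := by
    simpa [IsDiag, Pairwise] using hnd
  have hji := hL.single_mem_of_apply_ne_zero h2 hy hij hyij
  have hle := hL.ker_trace_le_of_forall_single_mem fun k l ↦ hL.single_mem_of_ne h2 hij.symm hji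
  have : Nonempty ι := ⟨i⟩
  exact ((LinearMap.isCoatom_ker_of_surjective trace_surjective).le_iff.mp hle).symm

end Field

end Submodule

open Submodule in
theorem lie_ideals_of_matrix_algebra_general (n : ℕ)
    (L : Submodule ℂ (Matrix (Fin n) (Fin n) ℂ)) :
    (∀ x ∈ L, ∀ a : Matrix (Fin n) (Fin n) ℂ, x * a - a * x ∈ L) ↔
      L = ⊥ ∨ L = Submodule.span ℂ {(1 : Matrix (Fin n) (Fin n) ℂ)} ∨
      L = LinearMap.ker (Matrix.traceLinearMap (Fin n) ℂ ℂ) ∨ L = ⊤ := by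
  refine ⟨fun (hL : L.IsLieIdeal) ↦ ?_, ?_⟩
  · by_cases hdiag : ∀ x ∈ L, x.IsDiag
    · rcases hL.eq_bot_or_eq_span_one_of_forall_isDiag hdiag with h | h
      exacts [Or.inl h, Or.inr (Or.inl h)]
    · push Not at hdiag
      obtain ⟨y, hy, hnd⟩ := hdiag
      exact Or.inr (Or.inr (hL.eq_ker_trace_or_eq_top_of_not_isDiag two_ne_zero hy hnd))
  · rintro (rfl | rfl | rfl | rfl)
    exacts [isLieIdeal_bot, isLieIdeal_span_one, isLieIdeal_ker_trace, isLieIdeal_top]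

/-- A subspace `L` of `Mₙ(ℂ)` (`n ≥ 2`) is a Lie ideal iff it is
`(0)`, `ℂ·Iₙ`, `slₙ` or `Mₙ(ℂ)`. -/
theorem lie_ideals_of_matrix_algebra (n : ℕ) (hn : 2 ≤ n)
    (L : Submodule ℂ (Matrix (Fin n) (Fin n) ℂ)) :
    (∀ x ∈ L, ∀ a : Matrix (Fin n) (Fin n) ℂ, x * a - a * x ∈ L) ↔
      L = ⊥ ∨ L = Submodule.span ℂ {(1 : Matrix (Fin n) (Fin n) ℂ)} ∨
      L = LinearMap.ker (Matrix.traceLinearMap (Fin n) ℂ ℂ) ∨ L = ⊤ :=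
  lie_ideals_of_matrix_algebra_general n L
end

section
/- A subspace L of the direct sum A = ⊕_{i=1}^k M_{n_i}(ℂ) is a Lie ideal if and only if there exist δ_i ∈ {0,1} for 1 ≤ i ≤ k such that ⊕_{i=1}^k δ_i · sl_{n_i} ⊆ L ⊆ ⊕_{i=1}^k δ_i · M_{n_i} + ⊕_{i=1}^k ℂ·I_{n_i}. -/
/-!
Since `[x, Pi.single i a] = Pi.single i [xᵢ, a]`, each slice `Lᵢ = {m | Pi.single i m ∈ L}` of a
Lie ideal `L` of `⊕ᵢ Mₙᵢ` is a Lie ideal of `Mₙᵢ` containing `[xᵢ, a]` for all `x ∈ L`. Take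
`δᵢ = 1` exactly when some `x ∈ L` has a non-scalar block `xᵢ`. Then `x_pq ≠ 0` or `x_pp ≠ x_qq`
for some `p ≠ q`, and a double commutator with a matrix unit (applied to `[xᵢ, E_pq]` in the
second case) puts a matrix unit into `Lᵢ`. Bracketing with further matrix units yields every
`E_pq` (`p ≠ q`) and every `E_pp - E_qq`, which span `slₙᵢ`. If `δᵢ = 0`, every block is scalar.
-/

open Matrix

def Submodule.IsLieIdeal_s1 {R A : Type*} [Semiring R] [Ring A] [Module R A]
    (L : Submodule R A) : Prop :=
  ∀ x ∈ L, ∀ a, x * a - a * x ∈ L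

theorem Matrix.eq_sum_single_sub_of_trace_eq_zero {n R : Type*} [Fintype n] [DecidableEq n]
    [CommRing R] (i : n) {m : Matrix n n R} (hm : m.trace = 0) :
    m = ∑ p, ∑ q, (single p q (m p q) - if p = q then single i i (m p q) else 0) := by
  have hdiag : ∑ p, single i i (m p p) = 0 :=
    calc ∑ p, single i i (m p p) = single i i m.trace :=
          (map_sum (singleAddMonoidHom (α := R) i i) _ _).symm
      _ = 0 := by rw [hm, single_zero]
  simp only [Finset.sum_sub_distrib, Finset.sum_ite_eq, Finset.mem_univ, if_true]
  rw [hdiag, sub_zero, ← matrix_eq_sum_single]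

theorem Matrix.exists_apply_ne_of_notMem_span_one {n F : Type*} [Fintype n] [DecidableEq n]
    [Field F] {x : Matrix n n F} (hx : x ∉ Submodule.span F {1}) :
    ∃ p q, p ≠ q ∧ (x p q ≠ 0 ∨ x p p ≠ x q q) := by
  contrapose! hx
  cases isEmpty_or_nonempty n with
  | inl => simp [Subsingleton.elim x 0]
  | inr h =>
    obtain ⟨i⟩ := h
    refine Submodule.mem_span_singleton.2 ⟨x i i, ?_⟩
    ext p q
    obtain rfl | hpq := eq_or_ne p q
    · obtain rfl | hpi := eq_or_ne p i
      · simp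
      · simp [(hx p i hpi).2]
    · simp [one_apply_ne hpq, (hx p q hpq).1]

theorem Pi.mul_single_sub_single_mul {ι : Type*} [DecidableEq ι] {A : ι → Type*}
    [∀ i, Ring (A i)] (x : ∀ i, A i) (i : ι) (a : A i) :
    x * Pi.single i a - Pi.single i a * x = Pi.single i (x i * a - a * x i) := by
  rw [Pi.single_sub, Pi.single_mul_right, Pi.single_mul_left]

theorem Submodule.pi_univ_sup_pi_univ {R ι : Type*} [Semiring R] [Finite ι] {M : ι → Type*}
    [∀ i, AddCommMonoid (M i)] [∀ i, Module R (M i)] (p q : ∀ i, Submodule R (M i)) :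
    pi Set.univ p ⊔ pi Set.univ q = pi Set.univ (p ⊔ q) := by
  classical
  simp only [← iSup_map_single, ← iSup_sup_eq, Pi.sup_apply, map_sup]

namespace Submodule.IsLieIdeal_s1

section Matrix

variable {F n : Type*} [Field F] [Fintype n] [DecidableEq n] {K : Submodule F (Matrix n n F)}

theorem single_mem_of_apply_ne_zero_s1 [NeZero (2 : F)] (hK : K.IsLieIdeal_s1)
    {x : Matrix n n F} (hx : ∀ a, x * a - a * x ∈ K) {p q : n} (hpq : p ≠ q)
    (h : x p q ≠ 0) : single q p 1 ∈ K := by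
  have hsq : single q p (1 : F) * single q p 1 = 0 := single_mul_single_of_ne _ _ _ _ hpq _
  -- `E := E_qp` squares to zero, so `[[x, E], E] = -2 E x E = -2 x_pq E`.
  have key : (x * single q p 1 - single q p 1 * x) * single q p 1 -
      single q p 1 * (x * single q p 1 - single q p 1 * x) =
      (-2 * x p q) • single q p (1 : F) := by
    calc _ = x * (single q p 1 * single q p 1) - (2 : F) • (single q p 1 * x * single q p 1) +
          single q p 1 * single q p 1 * x := by
          simp only [sub_mul, mul_sub, mul_assoc, two_smul]; abel
      _ = _ := by rw [hsq, single_mul_mul_single, smul_single]; simp [smul_single]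
  have := hK _ (hx (single q p 1)) (single q p 1)
  rwa [key, smul_mem_iff _ (mul_ne_zero (neg_ne_zero.2 two_ne_zero) h)] at this

theorem single_mem_of_diag_ne [NeZero (2 : F)] (hK : K.IsLieIdeal_s1)
    {x : Matrix n n F} (hx : ∀ a, x * a - a * x ∈ K) {p q : n} (hpq : p ≠ q)
    (h : x p p ≠ x q q) : single q p 1 ∈ K := by
  refine single_mem_of_apply_ne_zero_s1 hK (hK _ (hx (single p q 1))) hpq ?_
  simpa [mul_single_apply_same, single_mul_apply_same, sub_eq_zero] using h

theorem single_mem_of_single_mem_of_ne [NeZero (2 : F)] (hK : K.IsLieIdeal_s1) {a b c : n}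
    (hab : a ≠ b) (hac : a ≠ c) (h : single a b 1 ∈ K) : single c a 1 ∈ K := by
  refine single_mem_of_apply_ne_zero_s1 hK (hK _ (hK _ h (single b c 1))) hac ?_
  simp [single_mul_apply_of_ne (h := hab)]

theorem single_mem_of_single_mem [NeZero (2 : F)] (hK : K.IsLieIdeal_s1) {i j : n} (hij : i ≠ j)
    (h : single i j 1 ∈ K) {p q : n} (hpq : p ≠ q) : single p q 1 ∈ K := by
  obtain rfl | hqi := eq_or_ne q i
  · exact single_mem_of_single_mem_of_ne hK hij hpq.symm h
  · exact single_mem_of_single_mem_of_ne hK hqi hpq.symm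
      (single_mem_of_single_mem_of_ne hK hij (Ne.symm hqi) h)

theorem ker_trace_le_of_single_mem [NeZero (2 : F)] (hK : K.IsLieIdeal_s1) {i j : n} (hij : i ≠ j)
    (h : single i j 1 ∈ K) : LinearMap.ker (traceLinearMap n F F) ≤ K := by
  have hoff {p q : n} (hpq : p ≠ q) (c : F) : single p q c ∈ K := by
    simpa [smul_single] using K.smul_mem c (single_mem_of_single_mem hK hij h hpq)
  have hdiag (p : n) (c : F) : single p p c - single i i c ∈ K := by
    obtain rfl | hpi := eq_or_ne p i
    · simp
    · simpa [hpi, hpi.symm, smul_single] using hK _ (hoff hpi c) (single i p 1)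
  intro m hm
  rw [eq_sum_single_sub_of_trace_eq_zero i hm]
  refine K.sum_mem fun p _ => K.sum_mem fun q _ => ?_
  obtain rfl | hpq := eq_or_ne p q
  · simpa using hdiag p (m p p)
  · simpa [hpq] using hoff hpq (m p q)

theorem ker_trace_le_of_notMem_span_one [NeZero (2 : F)] (hK : K.IsLieIdeal_s1)
    {x : Matrix n n F} (hx : ∀ a, x * a - a * x ∈ K) (hx₁ : x ∉ Submodule.span F {1}) :
    LinearMap.ker (traceLinearMap n F F) ≤ K := by
  obtain ⟨p, q, hpq, hne | hne⟩ := exists_apply_ne_of_notMem_span_one hx₁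
  · exact ker_trace_le_of_single_mem hK hpq.symm (single_mem_of_apply_ne_zero_s1 hK hx hpq hne)
  · exact ker_trace_le_of_single_mem hK hpq.symm (single_mem_of_diag_ne hK hx hpq hne)

end Matrix

section Pi

variable {R ι : Type*} [Semiring R] [DecidableEq ι] {A : ι → Type*} [∀ i, Ring (A i)]
  [∀ i, Module R (A i)] {L : Submodule R (∀ i, A i)}

theorem commutator_mem_comap_single (hL : L.IsLieIdeal_s1) {x : ∀ i, A i} (hx : x ∈ L) (i : ι)
    (a : A i) : x i * a - a * x i ∈ L.comap (LinearMap.single R A i) := by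
  simpa [Pi.mul_single_sub_single_mul] using hL x hx (Pi.single i a)

theorem comap_single (hL : L.IsLieIdeal_s1) (i : ι) :
    (L.comap (LinearMap.single R A i)).IsLieIdeal_s1 :=
  fun _ hx a => by simpa using hL.commutator_mem_comap_single hx i a

end Pi

section BlockDiagonal

variable {ι : Type*} [Fintype ι] {n : ι → Type*} [∀ i, Fintype (n i)] [∀ i, DecidableEq (n i)]

theorem exists_pi_ker_trace_le_and_le_pi_sup [DecidableEq ι] {F : Type*} [Field F]
    [NeZero (2 : F)] {L : Submodule F (∀ i, Matrix (n i) (n i) F)} (hL : L.IsLieIdeal_s1) :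
    ∃ δ : ι → Bool,
      pi Set.univ (fun i => if δ i then LinearMap.ker (traceLinearMap (n i) F F) else ⊥) ≤ L ∧
      L ≤ pi Set.univ (fun i => if δ i then ⊤ else ⊥) ⊔
        pi Set.univ (fun i => span F {(1 : Matrix (n i) (n i) F)}) := by
  classical
  refine ⟨fun i => decide (∃ x ∈ L, x i ∉ span F {1}), ?_, fun x hx => ?_⟩
  · rw [← iSup_map_single, iSup_le_iff]
    intro i
    rw [map_le_iff_le_comap]
    split_ifs with h
    · obtain ⟨x, hx, hx₁⟩ := of_decide_eq_true h
      exact (hL.comap_single i).ker_trace_le_of_notMem_span_one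
        (hL.commutator_mem_comap_single hx i) hx₁
    · exact bot_le
  · rw [pi_univ_sup_pi_univ, mem_pi]
    intro i _
    simp only [Pi.sup_apply]
    split_ifs with h
    · simp
    · simp only [decide_eq_true_eq, not_exists, not_and, not_not] at h
      simpa using h x hx

theorem of_pi_ker_trace_le_of_le_pi_sup {R : Type*} [CommRing R]
    {L : Submodule R (∀ i, Matrix (n i) (n i) R)} (δ : ι → Bool)
    (hlow : pi Set.univ
      (fun i => if δ i then LinearMap.ker (traceLinearMap (n i) R R) else ⊥) ≤ L)
    (hup : L ≤ pi Set.univ (fun i => if δ i then ⊤ else ⊥) ⊔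
      pi Set.univ (fun i => span R {(1 : Matrix (n i) (n i) R)})) :
    L.IsLieIdeal_s1 := by
  intro x hx a
  refine hlow fun i _ => ?_
  have hxi := hup hx
  rw [pi_univ_sup_pi_univ, mem_pi] at hxi
  specialize hxi i trivial
  simp only [Pi.sup_apply] at hxi
  by_cases h : δ i
  · simp [h, trace_mul_comm (x i)]
  · obtain ⟨c, hc⟩ := mem_span_singleton.1 (by simpa [h] using hxi)
    simp [h, ← hc]

end BlockDiagonal

end Submodule.IsLieIdeal_s1

/-- A subspace `L` of `⊕ᵢ M_{nᵢ}(ℂ)` is a Lie ideal iff there are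
`δᵢ ∈ {0,1}` with `⊕ δᵢ sl_{nᵢ} ⊆ L ⊆ ⊕ δᵢ M_{nᵢ} + ⊕ ℂ I_{nᵢ}`. -/
theorem lie_ideals_of_direct_sum_of_matrix_algebras (k : ℕ) (n : Fin k → ℕ)
    (L : Submodule ℂ (∀ i : Fin k, Matrix (Fin (n i)) (Fin (n i)) ℂ)) :
    (∀ x ∈ L, ∀ a : (∀ i : Fin k, Matrix (Fin (n i)) (Fin (n i)) ℂ),
        x * a - a * x ∈ L) ↔
      ∃ δ : Fin k → Bool,
        Submodule.pi Set.univ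
            (fun i => if δ i then
                LinearMap.ker (Matrix.traceLinearMap (Fin (n i)) ℂ ℂ)
              else (⊥ : Submodule ℂ (Matrix (Fin (n i)) (Fin (n i)) ℂ))) ≤ L ∧
        L ≤ Submodule.pi Set.univ
              (fun i => if δ i then (⊤ : Submodule ℂ (Matrix (Fin (n i)) (Fin (n i)) ℂ))
                else ⊥) ⊔
            Submodule.pi Set.univ
              (fun i => Submodule.span ℂ {(1 : Matrix (Fin (n i)) (Fin (n i)) ℂ)}) :=
  ⟨Submodule.IsLieIdeal_s1.exists_pi_ker_trace_le_and_le_pi_sup,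
    fun ⟨δ, hlow, hup⟩ => Submodule.IsLieIdeal_s1.of_pi_ker_trace_le_of_le_pi_sup δ hlow hup⟩
end

section
/- Let G be a finite group and A a finite-dimensional complex algebra. A subspace L of the algebra of A-valued functions on G with convolution product is a Lie ideal if and only if (f · x^{-1})a - a(x · f) ∈ L for all f ∈ L, x ∈ G, a ∈ A, where (f · x)(y) = f(yx) and (x · f)(y) = f(x^{-1}y). -/
open scoped BigOperators

/-- The convolution product `(f*g)(x) = ∑_s f(xs) g(s⁻¹)` on `A`-valued functions on a
finite group `G`. -/
def fconv {G : Type*} [Group G] [Fintype G] {A : Type*} [Ring A]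
    (f g : G → A) : G → A :=
  fun x => ∑ s : G, f (x * s) * g s⁻¹

lemma fconv_delta {G : Type*} [Group G] [Fintype G] [DecidableEq G] {A : Type*} [Ring A]
    (f : G → A) (x : G) (a : A) :
    fconv f (fun y => if y = x then a else 0) = fun y => f (y * x⁻¹) * a := by
  funext y
  simp only [fconv]
  rw [Finset.sum_eq_single x⁻¹]
  · simp
  · intro b _ hb
    rw [if_neg, mul_zero]
    intro h; exact hb (by rw [← inv_inv b, h])
  · simp

lemma delta_fconv {G : Type*} [Group G] [Fintype G] [DecidableEq G] {A : Type*} [Ring A]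
    (f : G → A) (x : G) (a : A) :
    fconv (fun y => if y = x then a else 0) f = fun y => a * f (x⁻¹ * y) := by
  funext y
  simp only [fconv]
  rw [Finset.sum_eq_single (y⁻¹ * x)]
  · simp [mul_assoc]
  · intro b _ hb
    rw [if_neg, zero_mul]
    intro h; exact hb (by rw [← h]; group)
  · simp

/-- For a finite group `G` and a finite-dimensional complex algebra `A`,
a subspace `L` of the convolution algebra of `A`-valued functions on `G` is a Lie ideal iff
`(f · x⁻¹)a - a(x · f) ∈ L` for all `f ∈ L`, `x ∈ G`, `a ∈ A`. -/
theorem lie_ideals_of_finite_generalized_group_algebra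
    (G : Type*) [Group G] [Fintype G]
    (A : Type*) [Ring A] [Algebra ℂ A] [FiniteDimensional ℂ A]
    (L : Submodule ℂ (G → A)) :
    (∀ f ∈ L, ∀ g : G → A, fconv f g - fconv g f ∈ L) ↔
      (∀ f ∈ L, ∀ x : G, ∀ a : A,
        (fun y => f (y * x⁻¹) * a) - (fun y => a * f (x⁻¹ * y)) ∈ L) := by
  classical
  constructor
  · intro h f hf x a
    have := h f hf (fun y => if y = x then a else 0)
    rwa [fconv_delta, delta_fconv] at this
  · intro h f hf g
    have key : fconv f g - fconv g f =
        ∑ x : G, ((fun y => f (y * x⁻¹) * g x) - (fun y => g x * f (x⁻¹ * y))) := by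
      funext y
      simp only [Finset.sum_apply, Pi.sub_apply, fconv, Finset.sum_sub_distrib]
      congr 1
      · exact Fintype.sum_equiv (Equiv.inv G) _ _ (fun s => by simp)
      · exact Fintype.sum_equiv (Equiv.mulLeft y) _ _ (fun s => by simp [mul_assoc])
    rw [key]
    exact Submodule.sum_mem L (fun x _ => h f hf x (g x))
end

section
/- Let G be a finite group, A an algebra, and L a subspace of A. Define L̃ = {f : G → A : f(x) ∈ L for all x ∈ G}, a subspace of the convolution algebra of A-valued functions on G. If L̃ is a Lie ideal of the convolution algebra, then L is a Lie ideal of A. If moreover G is abelian, the converse holds. -/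
open scoped BigOperators

/-- Let `G` be a finite group, `A` an algebra and `L` a subspace of `A`,
and let `L̃ = {f : G → A | ∀ x, f x ∈ L}`. If `L̃` is a Lie ideal of the convolution
algebra then `L` is a Lie ideal of `A`; the converse holds when `G` is abelian. -/
theorem lie_ideal_of_tilde_subspace
    (G : Type*) [Group G] [Fintype G]
    (A : Type*) [Ring A] [Algebra ℂ A]
    (L : Submodule ℂ A) (Lt : Submodule ℂ (G → A))
    (hLt : (Lt : Set (G → A)) = {f : G → A | ∀ x, f x ∈ L}) :
    ((∀ f ∈ Lt, ∀ h : G → A, fconv f h - fconv h f ∈ Lt) →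
        (∀ l ∈ L, ∀ a : A, l * a - a * l ∈ L)) ∧
      ((∀ x y : G, x * y = y * x) →
        (∀ l ∈ L, ∀ a : A, l * a - a * l ∈ L) →
          (∀ f ∈ Lt, ∀ h : G → A, fconv f h - fconv h f ∈ Lt)) := by
  classical
  have hmem : ∀ f : G → A, f ∈ Lt ↔ ∀ x, f x ∈ L := by
    intro f
    constructor
    · intro hf x
      have : f ∈ {f : G → A | ∀ x, f x ∈ L} := hLt ▸ hf
      exact this x
    · intro hf
      show f ∈ (Lt : Set (G → A))
      rw [hLt]; exact hf
  constructor
  · intro H l hl a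
    set f : G → A := fun _ => l with hf
    set h : G → A := fun x => if x = 1 then a else 0 with hh
    have hfLt : f ∈ Lt := (hmem f).2 fun _ => hl
    have key := (hmem _).1 (H f hfLt h) 1
    have h1 : fconv f h 1 = l * a := by
      simp only [fconv, hf, hh]
      rw [Finset.sum_eq_single (1 : G)]
      · simp
      · intro s _ hs
        simp [inv_eq_one, hs]
      · simp
    have h2 : fconv h f 1 = a * l := by
      simp only [fconv, hf, hh]
      rw [Finset.sum_eq_single (1 : G)]
      · simp
      · intro s _ hs
        simp [hs]
      · simp
    simpa [Pi.sub_apply, h1, h2] using key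
  · intro hcomm hLie f hf h
    rw [hmem]
    intro x
    have hfx : ∀ y, f y ∈ L := (hmem f).1 hf
    have hc : ∀ s : G, x * s * x⁻¹ = s := fun s => by
      rw [hcomm x s, mul_assoc, mul_inv_cancel, mul_one]
    have reindex : (∑ s : G, h (x * s) * f s⁻¹) = ∑ s : G, h s⁻¹ * f (x * s) := by
      apply Finset.sum_nbij' (fun s => (x * s)⁻¹) (fun s => (x * s)⁻¹)
      · intro s _; simp
      · intro s _; simp
      · intro s _; rw [mul_inv_rev, inv_inv]; exact hc s
      · intro s _; rw [mul_inv_rev, inv_inv]; exact hc s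
      · intro s _; rw [inv_inv, mul_inv_rev, ← mul_assoc, hc]
    have : (fconv f h - fconv h f) x
        = ∑ s : G, (f (x * s) * h s⁻¹ - h s⁻¹ * f (x * s)) := by
      simp only [Pi.sub_apply, fconv, reindex, Finset.sum_sub_distrib]
    rw [this]
    exact Submodule.sum_mem _ fun s _ => hLie _ (hfx _) _
end

section
/- Let G = H × K be a product of finite groups with K abelian, and A an algebra. A subspace L of the convolution algebra of A-valued functions on G is a Lie ideal provided that w · f ∈ L for all w ∈ {e_H} × K and f ∈ L, and (f · z^{-1})a - a(z · f) ∈ L for all f ∈ L, a ∈ A, and z ∈ H × {e_K}, where (f · x)(y) = f(yx) and (x · f)(y) = f(x^{-1}y). -/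
open scoped BigOperators

/-- Let `G = H × K` be a product of finite groups with `K` abelian and
`A` an algebra. A subspace `L` of the convolution algebra of `A`-valued functions on `G`
is a Lie ideal provided `w · f ∈ L` for all `w ∈ {e} × K`, `f ∈ L`, and
`(f · z⁻¹)a - a(z · f) ∈ L` for all `f ∈ L`, `a ∈ A`, `z ∈ H × {e}`. -/
theorem lie_ideal_of_product_with_abelian_factor
    (H : Type*) [Group H] [Fintype H]
    (K : Type*) [CommGroup K] [Fintype K]
    (A : Type*) [Ring A] [Algebra ℂ A]
    (L : Submodule ℂ (H × K → A))
    (h1 : ∀ f ∈ L, ∀ w : K, (fun y : H × K => f (((1 : H), w)⁻¹ * y)) ∈ L)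
    (h2 : ∀ f ∈ L, ∀ a : A, ∀ z : H,
      (fun y : H × K => f (y * ((z, (1 : K)))⁻¹) * a) -
        (fun y : H × K => a * f (((z, (1 : K)))⁻¹ * y)) ∈ L) :
    ∀ f ∈ L, ∀ g : H × K → A, fconv f g - fconv g f ∈ L := by
  intro f hf g
  have key : ∀ t : H × K,
      ((fun x : H × K => f (x * t) * g t⁻¹) - fun x : H × K => g t⁻¹ * f (t * x)) ∈ L := by
    intro t
    have hf1 := h1 f hf t.2⁻¹
    have h := h2 _ hf1 (g t⁻¹) t.1⁻¹
    convert h using 2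
    · funext y
      congr 2
      ext <;> simp [mul_comm]
    · funext y
      congr 2
      ext <;> simp
  have expand : fconv f g - fconv g f
      = ∑ t : H × K, ((fun x : H × K => f (x * t) * g t⁻¹) - fun x : H × K => g t⁻¹ * f (t * x)) := by
    funext x
    simp only [fconv, Finset.sum_apply, Pi.sub_apply, Finset.sum_sub_distrib]
    congr 1
    refine Fintype.sum_equiv ((Equiv.mulLeft x).trans (Equiv.inv (H × K))) _ _ ?_
    intro t
    simp [mul_assoc]
  rw [expand]
  exact Submodule.sum_mem _ fun t _ => key t
end
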